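/- Let f be a continuous compactly supported function on [0,∞) (the even extension of a continuous compactly supported even function on ℝ). Then for every x ≥ 0, lim_{γ → 0⁺} ∫_0^∞ (ᵞT^y_x f)(x) y^γ dy = ∫_0^∞ f(t) dt. -/

import Mathlib

/-!
In the coordinates `u = (y cos φ, y sin φ)` of the upper half-plane, `y dy dφ` is Lebesgue measure
and `y^(γ-1) (sin φ)^(γ-1) = u₂^(γ-1)`, so `∫₀^∞ (ᵞT^y_x f)(x) y^γ dy` is `C(γ)` times the integral
of `f(|u - (x, 0)|) u₂^(γ-1)` over the half-plane. A horizontal translation removes `x`, and polar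
coordinates about the origin split what is left into `∫₀^∞ f(t) t^γ dt · ∫₀^π (sin φ)^(γ-1) dφ`.
The same splitting applied to the Gaussian `exp(-|u|²)` shows that the angular factor is `1 / C(γ)`.
So the weighted integral equals `∫₀^∞ f(t) t^γ dt` for every `γ > 0`, and dominated convergence
lets `γ → 0⁺`.
-/

open MeasureTheory Real Set Filter

noncomputable section

/-- The normalizing constant `C(ν) = Γ((ν+1)/2)/(√π Γ(ν/2))` of the generalized translation. -/
def transC (ν : ℝ) : ℝ := Real.Gamma ((ν + 1) / 2) / (Real.sqrt π * Real.Gamma (ν / 2))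

/-- One-dimensional generalized translation `(ᵛT^y_x f)(x)` generated by the Bessel operator
`B_ν`. -/
def genTrans1 (ν x y : ℝ) (f : ℝ → ℝ) : ℝ :=
  transC ν * ∫ φ in (0:ℝ)..π,
    f (Real.sqrt (x ^ 2 + y ^ 2 - 2 * x * y * Real.cos φ)) * Real.sin φ ^ (ν - 1)

open Topology

def halfPlaneWeight (γ : ℝ) : ℝ → ℝ := (Ioi 0).indicator fun t => t ^ (γ - 1)

lemma mul_halfPlaneWeight_mul_sin {r θ : ℝ} (γ : ℝ) (hr : 0 < r) (hθ : 0 < sin θ) :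
    r * halfPlaneWeight γ (r * sin θ) = r ^ γ * sin θ ^ (γ - 1) := by
  rw [halfPlaneWeight, indicator_of_mem (show r * sin θ ∈ Ioi 0 from mul_pos hr hθ),
    mul_rpow hr.le hθ.le, rpow_sub_one hr.ne']
  field_simp

lemma halfPlaneWeight_of_nonpos (γ : ℝ) {t : ℝ} (ht : t ≤ 0) : halfPlaneWeight γ t = 0 :=
  indicator_of_notMem (not_lt.2 ht) _

lemma integrableOn_halfPlaneWeight_Icc {γ : ℝ} (hγ : 0 < γ) (a b : ℝ) :
    IntegrableOn (halfPlaneWeight γ) (Icc a b) := by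
  have hrpow := (intervalIntegrable_iff' (by finiteness)).1
    (intervalIntegral.intervalIntegrable_rpow' (a := a) (b := b) (show -1 < γ - 1 by linarith))
  exact (hrpow.indicator measurableSet_Ioi).mono_set Icc_subset_uIcc

lemma locallyIntegrable_halfPlaneWeight_snd {γ : ℝ} (hγ : 0 < γ) :
    LocallyIntegrable fun u : ℝ × ℝ => halfPlaneWeight γ u.2 := by
  refine locallyIntegrable_iff.2 fun K hK => ?_
  obtain ⟨R, hR⟩ := hK.isBounded.subset_closedBall 0
  refine IntegrableOn.mono_set ?_ (hR.trans (closedBall_prod_same 0 0 R).superset)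
  rw [IntegrableOn, Measure.volume_eq_prod, ← Measure.prod_restrict, Real.closedBall_eq_Icc]
  exact (integrableOn_halfPlaneWeight_Icc hγ _ _).comp_snd _

lemma HasCompactSupport.comp_sqrt_sq_add_sq {M : Type*} [Zero M] {f : ℝ → M}
    (hf : HasCompactSupport f) : HasCompactSupport fun u : ℝ × ℝ => f √(u.1 ^ 2 + u.2 ^ 2) := by
  obtain ⟨R, hR⟩ := hf.isBounded.subset_closedBall 0
  refine HasCompactSupport.intro (isCompact_closedBall (0 : ℝ × ℝ) R) fun u hu => ?_
  refine image_eq_zero_of_notMem_tsupport fun hmem => hu ?_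
  have hle := hR hmem
  rw [Metric.mem_closedBall, dist_zero_right, Real.norm_of_nonneg (sqrt_nonneg _)] at hle
  rw [Metric.mem_closedBall, dist_zero_right, Prod.norm_def, max_le_iff, Real.norm_eq_abs,
    Real.norm_eq_abs]
  exact ⟨(abs_le_sqrt (by nlinarith)).trans hle, (abs_le_sqrt (by nlinarith)).trans hle⟩

lemma integrable_radial_mul_halfPlaneWeight {f : ℝ → ℝ} (hf : Continuous f)
    (hsupp : HasCompactSupport f) {γ : ℝ} (hγ : 0 < γ) :
    Integrable fun u : ℝ × ℝ => f √(u.1 ^ 2 + u.2 ^ 2) * halfPlaneWeight γ u.2 :=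
  (locallyIntegrable_halfPlaneWeight_snd hγ).integrable_smul_left_of_hasCompactSupport
    (hf.comp (by fun_prop)) hsupp.comp_sqrt_sq_add_sq

section PolarUpperHalfPlane

variable {E : Type*} [NormedAddCommGroup E] [NormedSpace ℝ E]

lemma setIntegral_upperHalfPlane_comp_polarCoord_symm (G : ℝ × ℝ → E)
    (hG : ∀ u : ℝ × ℝ, u.2 ≤ 0 → G u = 0) :
    ∫ p in Ioi 0 ×ˢ Ioo 0 π, p.1 • G (polarCoord.symm p) = ∫ u, G u := by
  rw [← integral_comp_polarCoord_symm, polarCoord_target]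
  refine (setIntegral_eq_of_subset_of_forall_sdiff_eq_zero
    (measurableSet_Ioi.prod measurableSet_Ioo)
    (prod_mono subset_rfl (Ioo_subset_Ioo_left (by linarith [pi_pos]))) ?_).symm
  rintro ⟨r, θ⟩ ⟨⟨hr, hθ⟩, hS⟩
  have hθ0 : θ ≤ 0 := not_lt.1 fun h => hS ⟨hr, h, hθ.2⟩
  have hsin : sin θ ≤ 0 := sin_nonpos_of_nonpos_of_neg_pi_le hθ0 hθ.1.le
  rw [hG _ (mul_nonpos_of_nonneg_of_nonpos (le_of_lt hr) hsin), smul_zero]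

lemma integrableOn_upperHalfPlane_comp_polarCoord_symm {G : ℝ × ℝ → E} (hG : Integrable G) :
    IntegrableOn (fun p : ℝ × ℝ => p.1 • G (polarCoord.symm p)) (Ioi 0 ×ˢ Ioo 0 π) := by
  have hS : MeasurableSet (Ioi (0 : ℝ) ×ˢ Ioo 0 π) := measurableSet_Ioi.prod measurableSet_Ioo
  have hSt : Ioi (0 : ℝ) ×ˢ Ioo 0 π ⊆ polarCoord.target := by
    rw [polarCoord_target]
    exact prod_mono subset_rfl (Ioo_subset_Ioo_left (by linarith [pi_pos]))
  have hdet := (integrableOn_image_iff_integrableOn_abs_det_fderiv_smul volume hS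
    (fun p _ => (hasFDerivAt_polarCoord_symm p).hasFDerivWithinAt)
    (polarCoord.symm.injOn.mono hSt) G).1 hG.integrableOn
  refine hdet.congr_fun (fun p hp => ?_) hS
  dsimp only
  rw [det_fderivPolarCoordSymm, abs_of_pos (show (0 : ℝ) < p.1 from hp.1)]

lemma integral_Ioi_integral_Ioo_comp_polarCoord_symm {G : ℝ × ℝ → E} (hG : Integrable G)
    (hG0 : ∀ u : ℝ × ℝ, u.2 ≤ 0 → G u = 0) :
    ∫ r in Ioi 0, ∫ θ in Ioo 0 π, r • G (polarCoord.symm (r, θ)) = ∫ u, G u := by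
  rw [← setIntegral_upperHalfPlane_comp_polarCoord_symm G hG0, Measure.volume_eq_prod,
    setIntegral_prod _ (integrableOn_upperHalfPlane_comp_polarCoord_symm hG)]

end PolarUpperHalfPlane

lemma integral_radial_mul_halfPlaneWeight (g : ℝ → ℝ) (γ : ℝ) :
    ∫ u : ℝ × ℝ, g √(u.1 ^ 2 + u.2 ^ 2) * halfPlaneWeight γ u.2
      = (∫ r in Ioi 0, g r * r ^ γ) * ∫ θ in Ioo 0 π, sin θ ^ (γ - 1) := by
  rw [← setIntegral_upperHalfPlane_comp_polarCoord_symm _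
      fun u hu => by rw [halfPlaneWeight_of_nonpos γ hu, mul_zero],
    Measure.volume_eq_prod, ← setIntegral_prod_mul]
  refine setIntegral_congr_fun (measurableSet_Ioi.prod measurableSet_Ioo) ?_
  rintro ⟨r, θ⟩ ⟨hr, hθ⟩
  have hr : (0 : ℝ) < r := hr
  have hsin : 0 < sin θ := sin_pos_of_pos_of_lt_pi hθ.1 hθ.2
  have hnorm : (r * cos θ) ^ 2 + (r * sin θ) ^ 2 = r ^ 2 := by
    linear_combination r ^ 2 * sin_sq_add_cos_sq θ
  simp only [polarCoord_symm_apply, smul_eq_mul, hnorm, sqrt_sq hr.le]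
  rw [mul_left_comm, mul_halfPlaneWeight_mul_sin γ hr hsin]
  ring

lemma integral_halfPlaneWeight_mul_exp_neg_sq {γ : ℝ} (hγ : 0 < γ) :
    ∫ t, halfPlaneWeight γ t * exp (-t ^ 2) = Gamma (γ / 2) / 2 := by
  have h := integral_rpow_mul_exp_neg_rpow (p := 2) (by norm_num) (show -1 < γ - 1 by linarith)
  simp only [Real.rpow_two, sub_add_cancel] at h
  have hind : (fun t => halfPlaneWeight γ t * exp (-t ^ 2))
      = (Ioi 0).indicator fun t => t ^ (γ - 1) * exp (-t ^ 2) :=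
    funext fun t => by rw [halfPlaneWeight, indicator_mul_left]
  rw [hind, integral_indicator measurableSet_Ioi, h]
  ring

theorem integral_sin_rpow_Ioo {γ : ℝ} (hγ : 0 < γ) :
    ∫ θ in Ioo 0 π, sin θ ^ (γ - 1) = √π * Gamma (γ / 2) / Gamma ((γ + 1) / 2) := by
  have hΓ := Gamma_pos_of_pos (show 0 < (γ + 1) / 2 by linarith)
  have hradial := integral_radial_mul_halfPlaneWeight (fun r => exp (-r ^ 2)) γ
  have hcart : ∫ u : ℝ × ℝ, exp (-√(u.1 ^ 2 + u.2 ^ 2) ^ 2) * halfPlaneWeight γ u.2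
      = √π * (Gamma (γ / 2) / 2) := by
    simp_rw [sq_sqrt (add_nonneg (sq_nonneg _) (sq_nonneg _)), neg_add, exp_add, mul_assoc]
    rw [Measure.volume_eq_prod, integral_prod_mul (fun t => exp (-t ^ 2))
      (fun t => exp (-t ^ 2) * halfPlaneWeight γ t)]
    simp_rw [mul_comm (exp _) (halfPlaneWeight γ _)]
    rw [integral_halfPlaneWeight_mul_exp_neg_sq hγ]
    simpa using congr_arg (· * (Gamma (γ / 2) / 2)) (integral_gaussian 1)
  have hrad : ∫ r in Ioi 0, exp (-r ^ 2) * r ^ γ = Gamma ((γ + 1) / 2) / 2 := by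
    have h := integral_rpow_mul_exp_neg_rpow (p := 2) (by norm_num) (show -1 < γ by linarith)
    simp only [Real.rpow_two] at h
    simp_rw [mul_comm (exp _)]
    rw [h]
    ring
  rw [hcart, hrad] at hradial
  field_simp
  linarith

theorem setIntegral_genTrans1_mul_rpow {f : ℝ → ℝ} (hf : Continuous f)
    (hsupp : HasCompactSupport f) (x : ℝ) {γ : ℝ} (hγ : 0 < γ) :
    ∫ y in Ioi 0, genTrans1 γ x y f * y ^ γ = ∫ t in Ioi 0, f t * t ^ γ := by
  set G : ℝ × ℝ → ℝ := fun u => f √(u.1 ^ 2 + u.2 ^ 2) * halfPlaneWeight γ u.2 with hG_def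
  have hG : Integrable G := integrable_radial_mul_halfPlaneWeight hf hsupp hγ
  have hpolar : ∀ y ∈ Ioi (0 : ℝ), genTrans1 γ x y f * y ^ γ
      = transC γ * ∫ θ in Ioo 0 π, y • G (polarCoord.symm (y, θ) - (x, 0)) := by
    intro y hy
    rw [genTrans1, intervalIntegral.integral_of_le pi_pos.le, integral_Ioc_eq_integral_Ioo,
      mul_assoc, ← integral_mul_const]
    refine congr_arg _ (setIntegral_congr_fun measurableSet_Ioo fun θ hθ => ?_)
    have hsin : 0 < sin θ := sin_pos_of_pos_of_lt_pi hθ.1 hθ.2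
    have hdist : (y * cos θ - x) ^ 2 + (y * sin θ) ^ 2 = x ^ 2 + y ^ 2 - 2 * x * y * cos θ := by
      linear_combination y ^ 2 * sin_sq_add_cos_sq θ
    simp only [hG_def, polarCoord_symm_apply, Prod.mk_sub_mk, sub_zero, smul_eq_mul, hdist]
    rw [mul_left_comm, mul_halfPlaneWeight_mul_sin γ hy hsin]
    ring
  calc ∫ y in Ioi 0, genTrans1 γ x y f * y ^ γ
      = transC γ * ∫ y in Ioi 0, ∫ θ in Ioo 0 π, y • G (polarCoord.symm (y, θ) - (x, 0)) := by
        rw [setIntegral_congr_fun measurableSet_Ioi hpolar, integral_const_mul]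
    _ = transC γ * ∫ u, G (u - (x, 0)) := by
        rw [integral_Ioi_integral_Ioo_comp_polarCoord_symm (G := fun u => G (u - (x, 0)))
          (hG.comp_sub_right (x, 0))
          fun u hu => by simp [hG_def, halfPlaneWeight_of_nonpos γ hu]]
    _ = transC γ * ((∫ t in Ioi 0, f t * t ^ γ) * ∫ θ in Ioo 0 π, sin θ ^ (γ - 1)) := by
        rw [integral_sub_right_eq_self, integral_radial_mul_halfPlaneWeight]
    _ = ∫ t in Ioi 0, f t * t ^ γ := by
        have hΓ := Gamma_pos_of_pos (show 0 < γ / 2 by linarith)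
        have hΓ' := Gamma_pos_of_pos (show 0 < (γ + 1) / 2 by linarith)
        rw [integral_sin_rpow_Ioo hγ, transC]
        field_simp

lemma rpow_le_max_one {t γ : ℝ} (ht : 0 ≤ t) (hγ₀ : 0 ≤ γ) (hγ₁ : γ ≤ 1) : t ^ γ ≤ max 1 t := by
  rcases le_total t 1 with h | h
  · exact (rpow_le_one ht h hγ₀).trans (le_max_left _ _)
  · exact (rpow_le_rpow_of_exponent_le h hγ₁).trans (by rw [rpow_one]; exact le_max_right _ _)

theorem tendsto_setIntegral_mul_rpow_nhdsGT_zero {f : ℝ → ℝ} (hf : Continuous f)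
    (hsupp : HasCompactSupport f) :
    Tendsto (fun γ : ℝ => ∫ t in Ioi 0, f t * t ^ γ) (𝓝[>] 0) (𝓝 (∫ t in Ioi 0, f t)) := by
  refine tendsto_integral_filter_of_dominated_convergence (fun t => ‖f t‖ * max 1 t)
    (Eventually.of_forall fun γ =>
      (hf.measurable.mul (measurable_id.pow_const γ)).aestronglyMeasurable) ?_
    ((hf.norm.mul (continuous_const.max continuous_id)).integrable_of_hasCompactSupport
      hsupp.norm.mul_right).integrableOn ?_
  · filter_upwards [Ioo_mem_nhdsGT (show (0 : ℝ) < 1 by norm_num)] with γ hγ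
    refine (ae_restrict_iff' measurableSet_Ioi).2 (ae_of_all _ fun t ht => ?_)
    rw [norm_mul, Real.norm_of_nonneg (rpow_nonneg (le_of_lt ht) γ)]
    exact mul_le_mul_of_nonneg_left (rpow_le_max_one (le_of_lt ht) hγ.1.le hγ.2.le) (norm_nonneg _)
  · refine (ae_restrict_iff' measurableSet_Ioi).2 (ae_of_all _ fun t ht => ?_)
    have hpow : Tendsto (fun γ : ℝ => t ^ γ) (𝓝[>] 0) (𝓝 1) := by
      simpa using (continuousAt_const_rpow (b := 0) (ne_of_gt ht)).tendsto.mono_left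
        nhdsWithin_le_nhds
    simpa using hpow.const_mul (f t)

theorem genTrans_weighted_integral_limit_general
    (f : ℝ → ℝ) (hf : Continuous f) (hsupp : HasCompactSupport f)
    (x : ℝ) :
    Filter.Tendsto (fun γ : ℝ => ∫ y in Set.Ioi (0:ℝ), genTrans1 γ x y f * y ^ γ)
      (nhdsWithin 0 (Set.Ioi 0))
      (nhds (∫ t in Set.Ioi (0:ℝ), f t)) := by
  refine (tendsto_setIntegral_mul_rpow_nhdsGT_zero hf hsupp).congr' ?_
  filter_upwards [self_mem_nhdsWithin] with γ hγ
  exact (setIntegral_genTrans1_mul_rpow hf hsupp x hγ).symm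

/-- For a continuous compactly supported (even) function `f` and `x ≥ 0`,
`lim_{γ → 0⁺} ∫_0^∞ (ᵞT^y_x f)(x) y^γ dy = ∫_0^∞ f(t) dt`. -/
theorem genTrans_weighted_integral_limit
    (f : ℝ → ℝ) (hf : Continuous f) (hsupp : HasCompactSupport f)
    (heven : ∀ t : ℝ, f (-t) = f t)
    (x : ℝ) (hx : 0 ≤ x) :
    Filter.Tendsto (fun γ : ℝ => ∫ y in Set.Ioi (0:ℝ), genTrans1 γ x y f * y ^ γ)
      (nhdsWithin 0 (Set.Ioi 0))
      (nhds (∫ t in Set.Ioi (0:ℝ), f t)) :=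
  genTrans_weighted_integral_limit_general f hf hsupp x
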